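/- arXiv:1207.5661 — 3 statements merged into one kernel-verified Lean document; each statement's English description precedes it below -/
import Mathlib

section
/- For λ ∈ [0,1), weights W_{ji} ∈ [0,1], nonempty out-neighbor sets O_j, and vectors r, s ∈ ℝⁿ with 0 ≤ r_i, s_i ≤ 1, the function f_3 defined by (f_3(r))_j = (λ/(2|O_j|)) Σ_{i ∈ O_j} (W_{ji} - r_i)² satisfies |(f_3(r))_j - (f_3(s))_j| ≤ λ ‖r - s‖_∞ for every coordinate j, and 0 ≤ (f_3(r))_j ≤ 1. -/
/-- On `[0,1]ⁿ`, the `L₂` average bias function `f₃` is contractive with decay constant `λ`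
and takes values in `[0,1]`. -/
theorem f3_contractive_and_bounds {n : ℕ} (lam : ℝ) (hlam0 : 0 ≤ lam) (hlam1 : lam < 1)
    (W : Fin n → Fin n → ℝ) (hW : ∀ j i, 0 ≤ W j i ∧ W j i ≤ 1)
    (O : Fin n → Finset (Fin n)) (hO : ∀ j, (O j).Nonempty)
    (f3 : (Fin n → ℝ) → (Fin n → ℝ))
    (hf3 : ∀ r j, f3 r j = (lam / (2 * ((O j).card : ℝ))) * ∑ i ∈ O j, (W j i - r i) ^ 2)
    (r s : Fin n → ℝ) (hr : ∀ i, 0 ≤ r i ∧ r i ≤ 1) (hs : ∀ i, 0 ≤ s i ∧ s i ≤ 1) :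
    ∀ j, |f3 r j - f3 s j| ≤ lam * ‖r - s‖ ∧ 0 ≤ f3 r j ∧ f3 r j ≤ 1 := by
  intro j
  have hcard : (0:ℝ) < ((O j).card : ℝ) := by
    exact_mod_cast Finset.card_pos.mpr (hO j)
  have hc : 0 ≤ lam / (2 * ((O j).card : ℝ)) :=
    div_nonneg hlam0 (by linarith)
  have hnorm : ∀ i, |r i - s i| ≤ ‖r - s‖ := by
    intro i
    have := norm_le_pi_norm (r - s) i
    simpa [Real.norm_eq_abs] using this
  have hnorm0 : 0 ≤ ‖r - s‖ := norm_nonneg _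
  refine ⟨?_, ?_, ?_⟩
  · rw [hf3, hf3, ← mul_sub, ← Finset.sum_sub_distrib, abs_mul,
      abs_of_nonneg hc]
    have hbound : |∑ i ∈ O j, ((W j i - r i) ^ 2 - (W j i - s i) ^ 2)|
        ≤ ∑ i ∈ O j, (2 * ‖r - s‖) := by
      refine (Finset.abs_sum_le_sum_abs _ _).trans (Finset.sum_le_sum ?_)
      intro i _
      have h1 : (W j i - r i) ^ 2 - (W j i - s i) ^ 2
          = (s i - r i) * (2 * W j i - r i - s i) := by ring
      rw [h1, abs_mul]
      have h2 : |s i - r i| ≤ ‖r - s‖ := by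
        have := hnorm i; rwa [abs_sub_comm] at this
      have h3 : |2 * W j i - r i - s i| ≤ 2 := by
        have := hW j i; have := hr i; have := hs i
        rw [abs_le]; constructor <;> linarith [(hW j i).1, (hW j i).2,
          (hr i).1, (hr i).2, (hs i).1, (hs i).2]
      calc |s i - r i| * |2 * W j i - r i - s i|
          ≤ ‖r - s‖ * 2 := mul_le_mul h2 h3 (abs_nonneg _) hnorm0
        _ = 2 * ‖r - s‖ := by ring
    calc lam / (2 * ((O j).card : ℝ)) * |∑ i ∈ O j, ((W j i - r i) ^ 2 - (W j i - s i) ^ 2)|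
        ≤ lam / (2 * ((O j).card : ℝ)) * (((O j).card : ℝ) * (2 * ‖r - s‖)) := by
          apply mul_le_mul_of_nonneg_left _ hc
          simpa using hbound
      _ = lam * ‖r - s‖ := by field_simp
  · rw [hf3]
    exact mul_nonneg hc (Finset.sum_nonneg fun i _ => sq_nonneg _)
  · rw [hf3]
    have hsum : ∑ i ∈ O j, (W j i - r i) ^ 2 ≤ ((O j).card : ℝ) := by
      calc ∑ i ∈ O j, (W j i - r i) ^ 2 ≤ ∑ i ∈ O j, (1:ℝ) := by
            refine Finset.sum_le_sum fun i _ => ?_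
            have h1 : |W j i - r i| ≤ 1 := by
              rw [abs_le]; constructor <;>
                linarith [(hW j i).1, (hW j i).2, (hr i).1, (hr i).2]
            calc (W j i - r i) ^ 2 = |W j i - r i| ^ 2 := (sq_abs _).symm
              _ ≤ 1 ^ 2 := pow_le_pow_left₀ (abs_nonneg _) h1 2
              _ = 1 := one_pow 2
        _ = ((O j).card : ℝ) := by simp
    calc lam / (2 * ((O j).card : ℝ)) * ∑ i ∈ O j, (W j i - r i) ^ 2
        ≤ lam / (2 * ((O j).card : ℝ)) * ((O j).card : ℝ) :=
          mul_le_mul_of_nonneg_left hsum hc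
      _ = lam / 2 := by field_simp
      _ ≤ 1 := by linarith
end

section
/- For λ ∈ [0,1), weights W_{ji} ∈ [0,1], nonempty out-neighbor sets O_j, and vectors r, s ∈ [0,1]ⁿ, the function f_4 defined by (f_4(r))_j = (λ/2) · max_{i ∈ O_j} (W_{ji} - r_i)² satisfies |(f_4(r))_j - (f_4(s))_j| ≤ λ ‖r - s‖_∞ for every coordinate j, and 0 ≤ (f_4(r))_j ≤ 1. -/
lemma f4_sup_le {n : ℕ} (W : Fin n → Fin n → ℝ) (hW : ∀ j i, 0 ≤ W j i ∧ W j i ≤ 1)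
    (O : Fin n → Finset (Fin n)) (hO : ∀ j, (O j).Nonempty)
    (r s : Fin n → ℝ) (hr : ∀ i, 0 ≤ r i ∧ r i ≤ 1) (hs : ∀ i, 0 ≤ s i ∧ s i ≤ 1) (j : Fin n) :
    (O j).sup' (hO j) (fun i => (W j i - r i) ^ 2) ≤
      (O j).sup' (hO j) (fun i => (W j i - s i) ^ 2) + 2 * ‖r - s‖ := by
  apply Finset.sup'_le
  intro i hi
  have hd : |r i - s i| ≤ ‖r - s‖ := by
    simpa using norm_le_pi_norm (r - s) i
  have h1 : r i - s i ≤ ‖r - s‖ := (abs_le.mp hd).2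
  have h2 : s i - r i ≤ ‖r - s‖ := by linarith [(abs_le.mp hd).1]
  have hle : (W j i - r i) ^ 2 ≤ (W j i - s i) ^ 2 + 2 * ‖r - s‖ := by
    nlinarith [(hW j i).1, (hW j i).2, (hr i).1, (hr i).2, (hs i).1, (hs i).2]
  exact hle.trans (by
    have := Finset.le_sup' (fun i => (W j i - s i) ^ 2) hi
    linarith)

/-- On `[0,1]ⁿ`, the `L₂` maximal bias function `f₄(r)_j = (λ/2) max_{i ∈ O_j} (W_{ji} - r_i)²`
is contractive with decay constant `λ` and takes values in `[0,1]`. -/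
theorem f4_contractive_and_bounds {n : ℕ} (lam : ℝ) (hlam0 : 0 ≤ lam) (hlam1 : lam < 1)
    (W : Fin n → Fin n → ℝ) (hW : ∀ j i, 0 ≤ W j i ∧ W j i ≤ 1)
    (O : Fin n → Finset (Fin n)) (hO : ∀ j, (O j).Nonempty)
    (r s : Fin n → ℝ) (hr : ∀ i, 0 ≤ r i ∧ r i ≤ 1) (hs : ∀ i, 0 ≤ s i ∧ s i ≤ 1) :
    ∀ j, |(lam / 2) * (O j).sup' (hO j) (fun i => (W j i - r i) ^ 2) -
            (lam / 2) * (O j).sup' (hO j) (fun i => (W j i - s i) ^ 2)| ≤ lam * ‖r - s‖ ∧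
      0 ≤ (lam / 2) * (O j).sup' (hO j) (fun i => (W j i - r i) ^ 2) ∧
      (lam / 2) * (O j).sup' (hO j) (fun i => (W j i - r i) ^ 2) ≤ 1 := by
  intro j
  set A := (O j).sup' (hO j) (fun i => (W j i - r i) ^ 2) with hA
  set B := (O j).sup' (hO j) (fun i => (W j i - s i) ^ 2) with hB
  have hAB : A ≤ B + 2 * ‖r - s‖ := f4_sup_le W hW O hO r s hr hs j
  have hBA : B ≤ A + 2 * ‖r - s‖ := by
    have := f4_sup_le W hW O hO s r hs hr j
    rwa [norm_sub_rev] at this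
  have hA0 : 0 ≤ A := by
    obtain ⟨i, hi⟩ := hO j
    exact le_trans (sq_nonneg (W j i - r i)) (Finset.le_sup' (fun i => (W j i - r i) ^ 2) hi)
  have hA1 : A ≤ 1 := by
    apply Finset.sup'_le
    intro i hi
    nlinarith [(hW j i).1, (hW j i).2, (hr i).1, (hr i).2]
  refine ⟨?_, ?_, ?_⟩
  · rw [← mul_sub, abs_mul, abs_of_nonneg (by linarith : (0:ℝ) ≤ lam / 2)]
    have : |A - B| ≤ 2 * ‖r - s‖ := abs_sub_le_iff.mpr ⟨by linarith, by linarith⟩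
    calc lam / 2 * |A - B| ≤ lam / 2 * (2 * ‖r - s‖) := by
          apply mul_le_mul_of_nonneg_left this (by linarith)
      _ = lam * ‖r - s‖ := by ring
  · positivity
  · nlinarith
end

section
/- For λ ∈ [0,1), weights W_{ji} ∈ [-1,1], nonempty out-neighbor sets O_j, and vectors r, s ∈ [-1,1]ⁿ, the function f_4* defined by (f_4*(r))_j = (λ/4) · max_{i ∈ O_j} (W_{ji} - r_i)² satisfies |(f_4*(r))_j - (f_4*(s))_j| ≤ λ ‖r - s‖_∞ for every coordinate j, and 0 ≤ (f_4*(r))_j ≤ 1. -/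
lemma abs_sup'_sub_sup'_le {α : Type*} (t : Finset α) (ht : t.Nonempty)
    (f g : α → ℝ) (c : ℝ) (h : ∀ i ∈ t, |f i - g i| ≤ c) :
    |t.sup' ht f - t.sup' ht g| ≤ c := by
  rw [abs_sub_le_iff]
  constructor
  · rw [sub_le_iff_le_add]
    apply Finset.sup'_le
    intro i hi
    have := (abs_sub_le_iff.mp (h i hi)).1
    have hg : g i ≤ t.sup' ht g := Finset.le_sup' g hi
    linarith
  · rw [sub_le_iff_le_add]
    apply Finset.sup'_le
    intro i hi
    have := (abs_sub_le_iff.mp (h i hi)).2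
    have hf : f i ≤ t.sup' ht f := Finset.le_sup' f hi
    linarith

/-- Signed networks: on `[-1,1]ⁿ` with weights in `[-1,1]`, the function
`f₄*(r)_j = (λ/4) max_{i ∈ O_j} (W_{ji} - r_i)²` is contractive with decay constant `λ`
and takes values in `[0,1]`. -/
theorem f4star_contractive_and_bounds {n : ℕ} (lam : ℝ) (hlam0 : 0 ≤ lam) (hlam1 : lam < 1)
    (W : Fin n → Fin n → ℝ) (hW : ∀ j i, -1 ≤ W j i ∧ W j i ≤ 1)
    (O : Fin n → Finset (Fin n)) (hO : ∀ j, (O j).Nonempty)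
    (r s : Fin n → ℝ) (hr : ∀ i, -1 ≤ r i ∧ r i ≤ 1) (hs : ∀ i, -1 ≤ s i ∧ s i ≤ 1) :
    ∀ j, |(lam / 4) * (O j).sup' (hO j) (fun i => (W j i - r i) ^ 2) -
            (lam / 4) * (O j).sup' (hO j) (fun i => (W j i - s i) ^ 2)| ≤ lam * ‖r - s‖ ∧
      0 ≤ (lam / 4) * (O j).sup' (hO j) (fun i => (W j i - r i) ^ 2) ∧
      (lam / 4) * (O j).sup' (hO j) (fun i => (W j i - r i) ^ 2) ≤ 1 := by
  intro j
  have hsup_nonneg : 0 ≤ (O j).sup' (hO j) (fun i => (W j i - r i) ^ 2) := by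
    obtain ⟨i, hi⟩ := hO j
    exact le_trans (sq_nonneg _) (Finset.le_sup' (fun i => (W j i - r i) ^ 2) hi)
  have hsup_le : (O j).sup' (hO j) (fun i => (W j i - r i) ^ 2) ≤ 4 := by
    apply Finset.sup'_le
    intro i _
    have h1 := hW j i
    have h2 := hr i
    nlinarith [sq_nonneg (W j i - r i)]
  refine ⟨?_, ?_, ?_⟩
  · rw [← mul_sub, abs_mul]
    have habs : |lam / 4| = lam / 4 := abs_of_nonneg (by linarith)
    rw [habs]
    have key : |(O j).sup' (hO j) (fun i => (W j i - r i) ^ 2) -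
        (O j).sup' (hO j) (fun i => (W j i - s i) ^ 2)| ≤ 4 * ‖r - s‖ := by
      apply abs_sup'_sub_sup'_le
      intro i _
      have hd : |r i - s i| ≤ ‖r - s‖ := by
        have := norm_le_pi_norm (r - s) i
        simpa using this
      have h1 := hW j i
      have h2 := hr i
      have h3 := hs i
      have hexp : (W j i - r i) ^ 2 - (W j i - s i) ^ 2
          = (2 * W j i - r i - s i) * (s i - r i) := by ring
      rw [hexp, abs_mul]
      have hb1 : |2 * W j i - r i - s i| ≤ 4 := by
        rw [abs_le]; constructor <;> linarith
      have hb2 : |s i - r i| ≤ ‖r - s‖ := by rwa [abs_sub_comm]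
      have h0 : (0:ℝ) ≤ |s i - r i| := abs_nonneg _
      nlinarith
    calc lam / 4 * |(O j).sup' (hO j) (fun i => (W j i - r i) ^ 2) -
          (O j).sup' (hO j) (fun i => (W j i - s i) ^ 2)|
        ≤ lam / 4 * (4 * ‖r - s‖) := by
          apply mul_le_mul_of_nonneg_left key (by linarith)
      _ = lam * ‖r - s‖ := by ring
  · positivity
  · nlinarith
end
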